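/- arXiv:1612.04240 — 3 statements merged into one kernel-verified Lean document; each statement's English description precedes it below -/
import Mathlib

section
/- Let d ≥ 1 be an integer and let c > 0 with c ≠ 1. Then there exist ε > 0 and C > 0, depending only on c, such that the following holds. Let τ₁, τ₂ ∈ ℝ and ξ₁, ξ₂ ∈ ℝ^d, set τ₃ := τ₁ − τ₂ and ξ₃ := ξ₁ − ξ₂, and let σ₁, σ₂, σ₃ ∈ {+1, −1} be arbitrary signs. If either (|ξ₂| ≤ ε|ξ₁| and |ξ₁| ≥ 1/ε) or (|ξ₁| ≤ ε|ξ₂| and |ξ₂| ≥ 1/ε), then max{ |τ₁ + σ₁⟨ξ₁⟩|, |τ₂ + σ₂⟨ξ₂⟩|, |τ₃ + σ₃·c·|ξ₃|| } ≥ C·max{|ξ₁|, |ξ₂|}. -/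
open MeasureTheory Filter
open scoped ENNReal BigOperators

noncomputable section

abbrev Ed (d : ℕ) := EuclideanSpace ℝ (Fin d)

/-- Japanese bracket ⟨ξ⟩ = (1+|ξ|²)^{1/2}. -/
def jap {d : ℕ} (ξ : Ed d) : ℝ := Real.sqrt (1 + ‖ξ‖^2)

/-- Klein-Gordon propagator symbol at time `t`: `e^{-iσt⟨ξ⟩}`. -/
def KGsym {d : ℕ} (σ : ℝ) (t : ℝ) (ξ : Ed d) : ℂ :=
  Complex.exp (-(Complex.I * σ * t * jap ξ))

/-- Wave propagator symbol at time `t`: `e^{-iσct|ξ|}`. -/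
def Wsym {d : ℕ} (c σ : ℝ) (t : ℝ) (ξ : Ed d) : ℂ :=
  Complex.exp (-(Complex.I * σ * c * t * ‖ξ‖))

/-- `L²` norm (of a frequency-side function). -/
def L2n {d : ℕ} (g : Ed d → ℂ) : ℝ≥0∞ := eLpNorm g 2 volume

/-- `V^p` norm. -/
def VpNorm {d : ℕ} (p : ℝ) (v : ℝ → Ed d → ℂ) : ℝ≥0∞ :=
  ⨆ (K : ℕ) (t : Fin (K+1) → ℝ) (_ : StrictMono t),
    (L2n (v (t (Fin.last K))) ^ p
      + ∑ k : Fin K, L2n (fun ξ => v (t k.succ) ξ - v (t k.castSucc) ξ) ^ p) ^ p⁻¹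

/-- `V^p_A` norm: the `V^p` norm of `t ↦ A(-t) u(t)`, where `A` is given by its symbol. -/
def VA {d : ℕ} (p : ℝ) (A : ℝ → Ed d → ℂ) (u : ℝ → Ed d → ℂ) : ℝ≥0∞ :=
  VpNorm p (fun t ξ => A (-t) ξ * u t ξ)

/-- `U²` atoms. -/
def IsU2Atom {d : ℕ} (a : ℝ → Ed d → ℂ) : Prop :=
  ∃ (K : ℕ) (t : Fin (K+1) → EReal) (φ : Fin K → Ed d → ℂ),
    StrictMono t ∧ t 0 = ⊥ ∧ t (Fin.last K) = ⊤ ∧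
    (∑ k : Fin K, L2n (φ k) ^ (2:ℝ)) = 1 ∧
    ∀ (s : ℝ) (ξ : Ed d), a s ξ =
      ∑ k : Fin K, if t k.castSucc ≤ (s : EReal) ∧ (s : EReal) < t k.succ then φ k ξ else 0

/-- `U²` norm. -/
def U2Norm {d : ℕ} (u : ℝ → Ed d → ℂ) : ℝ≥0∞ :=
  ⨅ (lam : ℕ → ℂ) (a : ℕ → ℝ → Ed d → ℂ) (_ : ∀ j, IsU2Atom (a j))
    (_ : Summable fun j => ‖lam j‖)
    (_ : ∀ t ξ, u t ξ = ∑' j, lam j * a j t ξ),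
    ENNReal.ofReal (∑' j, ‖lam j‖)

/-- `U²_A` norm. -/
def UA {d : ℕ} (A : ℝ → Ed d → ℂ) (u : ℝ → Ed d → ℂ) : ℝ≥0∞ :=
  U2Norm (fun t ξ => A (-t) ξ * u t ξ)

/-- A Littlewood-Paley bump function on `ℝ^d`. -/
def IsLP {d : ℕ} (φ : Ed d → ℝ) : Prop :=
  ContDiff ℝ (⊤ : ℕ∞) φ ∧ HasCompactSupport φ ∧ (∀ ξ, 0 ≤ φ ξ) ∧
  (∀ ξ : Ed d, φ ξ ≠ 0 → 1/2 ≤ ‖ξ‖ ∧ ‖ξ‖ ≤ 2) ∧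
  ∀ ξ : Ed d, ξ ≠ 0 → HasSum (fun n : ℤ => φ ((2:ℝ)^(-n) • ξ)) 1

/-- A Littlewood-Paley bump function on `ℝ` (for modulation decompositions). -/
def IsLP1 (φ : ℝ → ℝ) : Prop :=
  ContDiff ℝ (⊤ : ℕ∞) φ ∧ HasCompactSupport φ ∧ (∀ τ, 0 ≤ φ τ) ∧
  (∀ τ : ℝ, φ τ ≠ 0 → 1/2 ≤ |τ| ∧ |τ| ≤ 2) ∧
  ∀ τ : ℝ, τ ≠ 0 → HasSum (fun n : ℤ => φ ((2:ℝ)^(-n) * τ)) 1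

/-- Littlewood-Paley projection `P_N` (frequency side). -/
def PN {d : ℕ} (φ : Ed d → ℝ) (N : ℝ) (g : Ed d → ℂ) : Ed d → ℂ :=
  fun ξ => (φ (N⁻¹ • ξ) : ℂ) * g ξ

/-- Low-frequency projection `P_{<1}` (frequency side). -/
def Plt1 {d : ℕ} (φ : Ed d → ℝ) (g : Ed d → ℂ) : Ed d → ℂ :=
  fun ξ => ((1 - ∑' n : ℕ, φ ((2:ℝ)^(-(n:ℤ)) • ξ) : ℝ) : ℂ) * g ξ

/-- `Y^s_A` norm. -/
def Ynorm {d : ℕ} (φ : Ed d → ℝ) (A : ℝ → Ed d → ℂ) (s : ℝ) (u : ℝ → Ed d → ℂ) : ℝ≥0∞ :=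
  VA 2 A (fun t => Plt1 φ (u t))
  + (∑' n : ℕ, ENNReal.ofReal (((2:ℝ)^(n:ℕ)) ^ (2*s))
      * VA 2 A (fun t => PN φ ((2:ℝ)^(n:ℕ)) (u t)) ^ (2:ℝ)) ^ (2:ℝ)⁻¹

/-- Homogeneous `Ẏ^s_A` norm. -/
def Ydot {d : ℕ} (φ : Ed d → ℝ) (A : ℝ → Ed d → ℂ) (s : ℝ) (u : ℝ → Ed d → ℂ) : ℝ≥0∞ :=
  (∑' n : ℤ, ENNReal.ofReal (((2:ℝ)^n) ^ (2*s))
      * VA 2 A (fun t => PN φ ((2:ℝ)^n) (u t)) ^ (2:ℝ)) ^ (2:ℝ)⁻¹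

/-- `Z^s_A` norm. -/
def Znorm {d : ℕ} (φ : Ed d → ℝ) (A : ℝ → Ed d → ℂ) (s : ℝ) (u : ℝ → Ed d → ℂ) : ℝ≥0∞ :=
  UA A (fun t => Plt1 φ (u t))
  + (∑' n : ℕ, ENNReal.ofReal (((2:ℝ)^(n:ℕ)) ^ (2*s))
      * UA A (fun t => PN φ ((2:ℝ)^(n:ℕ)) (u t)) ^ (2:ℝ)) ^ (2:ℝ)⁻¹

/-- Homogeneous `Ż^s_A` norm. -/
def Zdot {d : ℕ} (φ : Ed d → ℝ) (A : ℝ → Ed d → ℂ) (s : ℝ) (u : ℝ → Ed d → ℂ) : ℝ≥0∞ :=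
  (∑' n : ℤ, ENNReal.ofReal (((2:ℝ)^n) ^ (2*s))
      * UA A (fun t => PN φ ((2:ℝ)^n) (u t)) ^ (2:ℝ)) ^ (2:ℝ)⁻¹

/-- `t ↦ A(-t)u(t)` is right continuous and tends to `0` in `L²` as `t → -∞`. -/
def RC0 {d : ℕ} (A : ℝ → Ed d → ℂ) (u : ℝ → Ed d → ℂ) : Prop :=
  (∀ t₀ : ℝ, Tendsto (fun t => L2n (fun ξ => A (-t) ξ * u t ξ - A (-t₀) ξ * u t₀ ξ))
      (nhdsWithin t₀ (Set.Ici t₀)) (nhds 0)) ∧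
  Tendsto (fun t => L2n (fun ξ => A (-t) ξ * u t ξ)) atBot (nhds 0)

/-- Inverse time-Fourier transform of `τ ↦ φ¹(τ/M)`. -/
def psiM (φ1 : ℝ → ℝ) (M : ℝ) (s : ℝ) : ℂ :=
  ∫ τ : ℝ, Complex.exp (2 * Real.pi * Complex.I * s * τ) * (φ1 (τ / M) : ℂ)

/-- Time convolution with `psiM`. -/
def Qtilde {d : ℕ} (φ1 : ℝ → ℝ) (M : ℝ) (g : ℝ → Ed d → ℂ) : ℝ → Ed d → ℂ :=
  fun t ξ => ∫ s : ℝ, g (t - s) ξ * psiM φ1 M s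

/-- Modulation projection `Q^A_M`. -/
def QAop {d : ℕ} (A : ℝ → Ed d → ℂ) (φ1 : ℝ → ℝ) (M : ℝ) (u : ℝ → Ed d → ℂ) :
    ℝ → Ed d → ℂ :=
  fun t ξ => A t ξ * Qtilde φ1 M (fun s ξ' => A (-s) ξ' * u s ξ') t ξ

/-- Modulation projection `Q^A_{≥ 2^m}`. -/
def QAge {d : ℕ} (A : ℝ → Ed d → ℂ) (φ1 : ℝ → ℝ) (m : ℤ) (u : ℝ → Ed d → ℂ) :
    ℝ → Ed d → ℂ :=
  fun t ξ => ∑' n : ℤ, if m ≤ n then QAop A φ1 ((2:ℝ)^n) u t ξ else 0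

/-- Modulation projection `Q^A_{< 2^m}`. -/
def QAlt {d : ℕ} (A : ℝ → Ed d → ℂ) (φ1 : ℝ → ℝ) (m : ℤ) (u : ℝ → Ed d → ℂ) :
    ℝ → Ed d → ℂ :=
  fun t ξ => u t ξ - QAge A φ1 m u t ξ

/-- Physical-space realization (inverse space Fourier transform) of a
frequency-side trajectory, as a function on space-time. -/
def phys {d : ℕ} (g : ℝ → Ed d → ℂ) : ℝ × Ed d → ℂ :=
  fun p => ∫ ξ : Ed d, Complex.exp (2 * Real.pi * Complex.I * (inner ℝ p.2 ξ : ℝ)) * g p.1 ξ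

end

/-- Core real-variable inequality, case `σ₁ = 1`. -/
lemma hlp1 (c ε δ : ℝ) (hc : 0 < c) (hδ1 : δ ≤ |1 - c|) (hδ2 : δ ≤ 1)
    (hε0 : 0 < ε) (hε1 : ε * (c + 3) ≤ δ / 2) (hε2 : ε ≤ 1/4)
    (A B D x y σ₂ σ₃ : ℝ) (h2 : σ₂ = 1 ∨ σ₂ = -1) (h3 : σ₃ = 1 ∨ σ₃ = -1)
    (hA1 : x ≤ A) (hA2 : A ≤ x + 1) (hB1 : y ≤ B) (hB2 : B ≤ y + 1)
    (hD1 : x - y ≤ D) (hD2 : D ≤ x + y) (hx : 0 ≤ x) (hy0 : 0 ≤ y)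
    (hy : y ≤ ε * x) (h1x : 1 ≤ ε * x) :
    δ / 2 * x ≤ |A - σ₂ * B - σ₃ * c * D| := by
  have hs2l : -(y+1) ≤ σ₂ * B := by rcases h2 with rfl | rfl <;> nlinarith
  have hs2r : σ₂ * B ≤ y + 1 := by rcases h2 with rfl | rfl <;> nlinarith
  have hεx : ε * x ≤ 1/4 * x := mul_le_mul_of_nonneg_right hε2 hx
  have hεx0 : 0 ≤ ε * x := by linarith
  have hεcx : ε * (c + 3) * x ≤ δ / 2 * x := mul_le_mul_of_nonneg_right hε1 hx
  have hcD2 : c * D ≤ c * (x + y) := mul_le_mul_of_nonneg_left hD2 hc.le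
  have hcD1 : c * (x - y) ≤ c * D := mul_le_mul_of_nonneg_left hD1 hc.le
  have hcy : c * y ≤ c * (ε * x) := mul_le_mul_of_nonneg_left hy hc.le
  rcases h3 with rfl | rfl
  · rcases le_or_gt c 1 with hcle | hcgt
    · have habs : |1 - c| = 1 - c := abs_of_nonneg (by linarith)
      have hδc : δ ≤ 1 - c := by rw [habs] at hδ1; exact hδ1
      have hδcx : δ * x ≤ (1 - c) * x := mul_le_mul_of_nonneg_right hδc hx
      refine le_trans ?_ (le_abs_self _)
      linarith
    · have habs : |1 - c| = c - 1 := by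
        rw [abs_of_nonpos (by linarith)]; ring
      have hδc : δ ≤ c - 1 := by rw [habs] at hδ1; exact hδ1
      have hδcx : δ * x ≤ (c - 1) * x := mul_le_mul_of_nonneg_right hδc hx
      refine le_trans ?_ (neg_le_abs _)
      linarith
  · have hδx : δ * x ≤ 1 * x := mul_le_mul_of_nonneg_right hδ2 hx
    have hcxy : 0 ≤ c * (x - y) := mul_nonneg hc.le (by linarith)
    refine le_trans ?_ (le_abs_self _)
    linarith

/-- Core real-variable inequality, general sign `σ₁`. -/
lemma hlp (c ε δ : ℝ) (hc : 0 < c) (hδ1 : δ ≤ |1 - c|) (hδ2 : δ ≤ 1)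
    (hε0 : 0 < ε) (hε1 : ε * (c + 3) ≤ δ / 2) (hε2 : ε ≤ 1/4)
    (A B D x y σ₁ σ₂ σ₃ : ℝ) (h1 : σ₁ = 1 ∨ σ₁ = -1)
    (h2 : σ₂ = 1 ∨ σ₂ = -1) (h3 : σ₃ = 1 ∨ σ₃ = -1)
    (hA1 : x ≤ A) (hA2 : A ≤ x + 1) (hB1 : y ≤ B) (hB2 : B ≤ y + 1)
    (hD1 : x - y ≤ D) (hD2 : D ≤ x + y) (hx : 0 ≤ x) (hy0 : 0 ≤ y)
    (hy : y ≤ ε * x) (h1x : 1 ≤ ε * x) :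
    δ / 2 * x ≤ |σ₁ * A - σ₂ * B - σ₃ * c * D| := by
  rcases h1 with rfl | rfl
  · simpa using hlp1 c ε δ hc hδ1 hδ2 hε0 hε1 hε2 A B D x y σ₂ σ₃ h2 h3
      hA1 hA2 hB1 hB2 hD1 hD2 hx hy0 hy h1x
  · have h := hlp1 c ε δ hc hδ1 hδ2 hε0 hε1 hε2 A B D x y (-σ₂) (-σ₃)
      (by rcases h2 with rfl | rfl <;> simp)
      (by rcases h3 with rfl | rfl <;> simp)
      hA1 hA2 hB1 hB2 hD1 hD2 hx hy0 hy h1x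
    calc δ / 2 * x ≤ |A - -σ₂ * B - -σ₃ * c * D| := h
      _ = |(-1) * A - σ₂ * B - σ₃ * c * D| := by
          rw [← abs_neg]; ring_nf
  
lemma jap_ge {d : ℕ} (ξ : Ed d) : ‖ξ‖ ≤ jap ξ := by
  have h := Real.sqrt_le_sqrt (show ‖ξ‖^2 ≤ 1 + ‖ξ‖^2 by linarith)
  rwa [Real.sqrt_sq (norm_nonneg ξ)] at h

lemma jap_le {d : ℕ} (ξ : Ed d) : jap ξ ≤ ‖ξ‖ + 1 := by
  have h := Real.sqrt_le_sqrt (show 1 + ‖ξ‖^2 ≤ (‖ξ‖ + 1)^2 by nlinarith [norm_nonneg ξ])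
  rwa [Real.sqrt_sq (by positivity)] at h

/-- If `|ξ₁| ≫ ⟨ξ₂⟩` or `⟨ξ₁⟩ ≪ |ξ₂|`, the maximal modulation dominates `max(|ξ₁|,|ξ₂|)`. -/
theorem stmt0 (c : ℝ) (hc : 0 < c) (hc1 : c ≠ 1) :
    ∃ ε > (0:ℝ), ∃ C > (0:ℝ), ∀ (d : ℕ), 1 ≤ d →
      ∀ (τ₁ τ₂ : ℝ) (ξ₁ ξ₂ : Ed d) (σ₁ σ₂ σ₃ : ℝ),
        (σ₁ = 1 ∨ σ₁ = -1) → (σ₂ = 1 ∨ σ₂ = -1) → (σ₃ = 1 ∨ σ₃ = -1) →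
        ((‖ξ₂‖ ≤ ε * ‖ξ₁‖ ∧ 1/ε ≤ ‖ξ₁‖) ∨ (‖ξ₁‖ ≤ ε * ‖ξ₂‖ ∧ 1/ε ≤ ‖ξ₂‖)) →
        C * max ‖ξ₁‖ ‖ξ₂‖ ≤
          max (max |τ₁ + σ₁ * jap ξ₁| |τ₂ + σ₂ * jap ξ₂|)
            |(τ₁ - τ₂) + σ₃ * c * ‖ξ₁ - ξ₂‖| := by
  have hδ0 : (0:ℝ) < min |1 - c| 1 := by
    apply lt_min _ one_pos
    rw [abs_pos]
    intro h
    exact hc1 (by linarith)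
  set δ : ℝ := min |1 - c| 1 with hδdef
  set ε : ℝ := min (δ / (2 * (c + 3))) (1/4) with hεdef
  have hε0 : 0 < ε := lt_min (by positivity) (by norm_num)
  have hε2 : ε ≤ 1/4 := min_le_right _ _
  have hε1 : ε * (c + 3) ≤ δ / 2 := by
    have h := min_le_left (δ / (2 * (c + 3))) (1/4)
    have hc3 : (0:ℝ) < c + 3 := by linarith
    calc ε * (c + 3) ≤ δ / (2 * (c + 3)) * (c + 3) := by nlinarith
      _ = δ / 2 := by field_simp
  refine ⟨ε, hε0, δ / 6, by positivity, ?_⟩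
  intro d _ τ₁ τ₂ ξ₁ ξ₂ σ₁ σ₂ σ₃ h1 h2 h3 hcase
  have hδ1 : δ ≤ |1 - c| := min_le_left _ _
  have hδ2 : δ ≤ 1 := min_le_right _ _
  -- reduce to the scalar inequality
  set m₁ := τ₁ + σ₁ * jap ξ₁
  set m₂ := τ₂ + σ₂ * jap ξ₂
  set m₃ := (τ₁ - τ₂) + σ₃ * c * ‖ξ₁ - ξ₂‖
  have hEe : σ₁ * jap ξ₁ - σ₂ * jap ξ₂ - σ₃ * c * ‖ξ₁ - ξ₂‖ = m₁ - m₂ - m₃ := by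
    simp only [m₁, m₂, m₃]; ring
  have hM : |σ₁ * jap ξ₁ - σ₂ * jap ξ₂ - σ₃ * c * ‖ξ₁ - ξ₂‖| ≤
      3 * max (max |m₁| |m₂|) |m₃| := by
    rw [hEe]
    have hm1 : |m₁| ≤ max (max |m₁| |m₂|) |m₃| := le_max_of_le_left (le_max_left _ _)
    have hm2 : |m₂| ≤ max (max |m₁| |m₂|) |m₃| := le_max_of_le_left (le_max_right _ _)
    have hm3 : |m₃| ≤ max (max |m₁| |m₂|) |m₃| := le_max_right _ _
    calc |m₁ - m₂ - m₃| ≤ |m₁ - m₂| + |m₃| := abs_sub _ _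
      _ ≤ |m₁| + |m₂| + |m₃| := by linarith [abs_sub m₁ m₂]
      _ ≤ 3 * max (max |m₁| |m₂|) |m₃| := by linarith
  have hkey : δ / 2 * max ‖ξ₁‖ ‖ξ₂‖ ≤
      |σ₁ * jap ξ₁ - σ₂ * jap ξ₂ - σ₃ * c * ‖ξ₁ - ξ₂‖| := by
    rcases hcase with ⟨hyx, hx1⟩ | ⟨hxy, hy1⟩
    · have h1x : 1 ≤ ε * ‖ξ₁‖ := by
        rw [div_le_iff₀ hε0] at hx1; linarith [mul_comm ε ‖ξ₁‖]
      have hmax : max ‖ξ₁‖ ‖ξ₂‖ = ‖ξ₁‖ := by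
        apply max_eq_left
        calc ‖ξ₂‖ ≤ ε * ‖ξ₁‖ := hyx
          _ ≤ ‖ξ₁‖ := by nlinarith [norm_nonneg ξ₁]
      rw [hmax]
      exact hlp c ε δ hc hδ1 hδ2 hε0 hε1 hε2 (jap ξ₁) (jap ξ₂) ‖ξ₁ - ξ₂‖
        ‖ξ₁‖ ‖ξ₂‖ σ₁ σ₂ σ₃ h1 h2 h3 (jap_ge ξ₁) (jap_le ξ₁) (jap_ge ξ₂) (jap_le ξ₂)
        (by linarith [norm_sub_norm_le ξ₁ ξ₂, le_abs_self (‖ξ₁‖ - ‖ξ₂‖),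
          abs_norm_sub_norm_le ξ₁ ξ₂])
        (norm_sub_le ξ₁ ξ₂) (norm_nonneg _) (norm_nonneg _) hyx h1x
    · have h1y : 1 ≤ ε * ‖ξ₂‖ := by
        rw [div_le_iff₀ hε0] at hy1; linarith [mul_comm ε ‖ξ₂‖]
      have hmax : max ‖ξ₁‖ ‖ξ₂‖ = ‖ξ₂‖ := by
        apply max_eq_right
        calc ‖ξ₁‖ ≤ ε * ‖ξ₂‖ := hxy
          _ ≤ ‖ξ₂‖ := by nlinarith [norm_nonneg ξ₂]
      rw [hmax]
      have h := hlp c ε δ hc hδ1 hδ2 hε0 hε1 hε2 (jap ξ₂) (jap ξ₁) ‖ξ₁ - ξ₂‖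
        ‖ξ₂‖ ‖ξ₁‖ σ₂ σ₁ (-σ₃) h2 h1
        (by rcases h3 with rfl | rfl <;> simp)
        (jap_ge ξ₂) (jap_le ξ₂) (jap_ge ξ₁) (jap_le ξ₁)
        (by
          have := abs_norm_sub_norm_le ξ₂ ξ₁
          have h2' : ‖ξ₂ - ξ₁‖ = ‖ξ₁ - ξ₂‖ := norm_sub_rev _ _
          linarith [le_abs_self (‖ξ₂‖ - ‖ξ₁‖)])
        (by
          have := norm_sub_le ξ₂ ξ₁
          have h2' : ‖ξ₂ - ξ₁‖ = ‖ξ₁ - ξ₂‖ := norm_sub_rev _ _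
          linarith)
        (norm_nonneg _) (norm_nonneg _) hxy h1y
      calc δ / 2 * ‖ξ₂‖ ≤ |σ₂ * jap ξ₂ - σ₁ * jap ξ₁ - -σ₃ * c * ‖ξ₁ - ξ₂‖| := h
        _ = |σ₁ * jap ξ₁ - σ₂ * jap ξ₂ - σ₃ * c * ‖ξ₁ - ξ₂‖| := by
            rw [← abs_neg]; ring_nf
  have hmax0 : 0 ≤ max ‖ξ₁‖ ‖ξ₂‖ := le_max_of_le_left (norm_nonneg _)
  nlinarith [hkey, hM]
end

section
/- Let d ≥ 1 be an integer and let c > 0 with c ≠ 1. There exist ε > 0 and κ > 0, depending only on c and d, such that for all nonzero vectors η, ζ ∈ ℝ^d with |η + ζ| ≤ ε·min(|η|, |ζ|), every coordinate index i ∈ {1, …, d} with |η_i| ≥ |η|/(2√d), and every sign σ ∈ {+1, −1}, one has | η_i/|η| + σ·c·ζ_i/|ζ| | ≥ κ. -/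
open MeasureTheory Filter
open scoped ENNReal BigOperators

lemma coord_le {d : ℕ} (v : Ed d) (i : Fin d) : |v i| ≤ ‖v‖ := by
  rw [EuclideanSpace.norm_eq]
  rw [show |v i| = Real.sqrt ((v i)^2) by rw [Real.sqrt_sq_eq_abs]]
  apply Real.sqrt_le_sqrt
  calc (v i)^2 = ‖v i‖^2 := by rw [Real.norm_eq_abs, sq_abs]
    _ ≤ ∑ j, ‖v j‖^2 :=
      Finset.single_le_sum (f := fun j => ‖v j‖^2) (fun j _ => by positivity) (Finset.mem_univ i)

lemma unit_sum_le {d : ℕ} (a b : Ed d) (ha : a ≠ 0) (hb : b ≠ 0) :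
    ‖(‖a‖⁻¹ • a) + (‖b‖⁻¹ • b)‖ ≤ 2 * ‖a + b‖ / ‖a‖ := by
  have ha' : (0:ℝ) < ‖a‖ := norm_pos_iff.2 ha
  have hb' : (0:ℝ) < ‖b‖ := norm_pos_iff.2 hb
  have key : (‖a‖⁻¹ • a) + (‖b‖⁻¹ • b) = ‖a‖⁻¹ • (a + b) + (‖b‖⁻¹ - ‖a‖⁻¹) • b := by
    rw [smul_add]; module
  rw [key]
  have h1 : ‖‖a‖⁻¹ • (a + b)‖ = ‖a + b‖ / ‖a‖ := by
    rw [norm_smul, norm_inv, norm_norm]; ring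
  have hab : |‖a‖ - ‖b‖| ≤ ‖a + b‖ := by
    simpa [sub_neg_eq_add] using abs_norm_sub_norm_le a (-b)
  have h2 : ‖(‖b‖⁻¹ - ‖a‖⁻¹) • b‖ ≤ ‖a + b‖ / ‖a‖ := by
    rw [norm_smul, Real.norm_eq_abs]
    rw [show ‖b‖⁻¹ - ‖a‖⁻¹ = (‖a‖ - ‖b‖)/(‖a‖*‖b‖) by
      rw [sub_div, div_mul_cancel_left₀ ha'.ne', mul_comm, div_mul_cancel_left₀ hb'.ne']]
    rw [abs_div, abs_of_pos (mul_pos ha' hb'),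
      show |‖a‖-‖b‖|/(‖a‖*‖b‖)*‖b‖ = |‖a‖-‖b‖|/‖a‖ by field_simp]
    gcongr
  calc _ ≤ ‖‖a‖⁻¹ • (a + b)‖ + ‖(‖b‖⁻¹ - ‖a‖⁻¹) • b‖ := norm_add_le _ _
    _ ≤ ‖a + b‖ / ‖a‖ + ‖a + b‖ / ‖a‖ := by rw [h1]; linarith
    _ = 2 * ‖a + b‖ / ‖a‖ := by ring

/-- Lower bound for the derivative of the resonance phase. -/
theorem stmt1 (d : ℕ) (hd : 1 ≤ d) (c : ℝ) (hc : 0 < c) (hc1 : c ≠ 1) :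
    ∃ ε > (0:ℝ), ∃ κ > (0:ℝ),
      ∀ (η ζ : Ed d), η ≠ 0 → ζ ≠ 0 → ‖η + ζ‖ ≤ ε * min ‖η‖ ‖ζ‖ →
      ∀ i : Fin d, ‖η‖ / (2 * Real.sqrt d) ≤ |η i| →
      ∀ σ : ℝ, (σ = 1 ∨ σ = -1) →
        κ ≤ |η i / ‖η‖ + σ * c * (ζ i / ‖ζ‖)| := by
  have hm : (0:ℝ) < min |1-c| (1+c) :=
    lt_min (abs_pos.2 (sub_ne_zero.2 fun h => hc1 h.symm)) (by linarith)
  set m := min |1-c| (1+c) with hm_def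
  set D := Real.sqrt d with hD_def
  have hD1 : (1:ℝ) ≤ D := Real.one_le_sqrt.2 (by exact_mod_cast hd)
  have hD0 : (0:ℝ) < D := lt_of_lt_of_le one_pos hD1
  refine ⟨m/(8*c*D), by positivity, m/(4*D), by positivity, ?_⟩
  intro η ζ hη hζ hsmall i hi σ hσ
  have hη' : (0:ℝ) < ‖η‖ := norm_pos_iff.2 hη
  have hζ' : (0:ℝ) < ‖ζ‖ := norm_pos_iff.2 hζ
  set x := η i / ‖η‖ with hx_def
  set y := ζ i / ‖ζ‖ with hy_def
  have hsum : |x + y| ≤ 2 * (m/(8*c*D)) := by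
    have h3 : ((‖η‖⁻¹ • η) + (‖ζ‖⁻¹ • ζ) : Ed d) i = x + y := by
      simp [PiLp.add_apply, PiLp.smul_apply, hx_def, hy_def, div_eq_inv_mul]
    have h2 := coord_le ((‖η‖⁻¹ • η) + (‖ζ‖⁻¹ • ζ)) i
    rw [h3] at h2
    have h1 := unit_sum_le η ζ hη hζ
    have h4 : ‖η + ζ‖ ≤ (m/(8*c*D)) * ‖η‖ :=
      hsmall.trans (mul_le_mul_of_nonneg_left (min_le_left _ _) (by positivity))
    have h5 : 2 * ‖η + ζ‖ / ‖η‖ ≤ 2 * (m/(8*c*D)) := by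
      rw [div_le_iff₀ hη']; nlinarith
    linarith
  have hx2 : 1/(2*D) ≤ |x| := by
    rw [hx_def, abs_div, abs_of_pos hη']
    rw [le_div_iff₀ hη']
    calc 1/(2*D) * ‖η‖ = ‖η‖ / (2 * D) := by ring
      _ ≤ |η i| := hi
  have h5 : m ≤ |1 - σ*c| := by
    rcases hσ with h|h <;> subst h
    · rw [one_mul]; exact min_le_left _ _
    · rw [show (1:ℝ) - (-1)*c = 1 + c by ring, abs_of_pos (by linarith)]
      exact min_le_right _ _
  have h6 : |σ*c| = c := by
    rcases hσ with h|h <;> subst h <;>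
      simp [abs_mul, abs_of_pos hc]
  have hA : m * (1/(2*D)) ≤ |1 - σ*c| * |x| :=
    mul_le_mul h5 hx2 (by positivity) (abs_nonneg _)
  have hB : c * |x+y| ≤ c * (2*(m/(8*c*D))) := by gcongr
  have hC : m*(1/(2*D)) - c*(2*(m/(8*c*D))) = m/(4*D) := by
    field_simp
    ring
  have htri : |(1 - σ*c)*x| - |σ*c*(x+y)| ≤ |x + σ*c*y| := by
    have : |(1 - σ*c)*x| ≤ |x + σ*c*y| + |σ*c*(x+y)| := by
      calc |(1 - σ*c)*x| = |(x + σ*c*y) - σ*c*(x+y)| := by ring_nf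
        _ ≤ |x + σ*c*y| + |σ*c*(x+y)| := abs_sub _ _
    linarith
  have hfin : m/(4*D) ≤ |(1 - σ*c)*x| - |σ*c*(x+y)| := by
    rw [abs_mul (1 - σ*c) x, abs_mul, h6]
    linarith
  calc m/(4*D) ≤ |x + σ*c*y| := le_trans hfin htri
    _ = |η i / ‖η‖ + σ * c * (ζ i / ‖ζ‖)| := by rw [hx_def, hy_def]
end

section
/- Let d ≥ 1 be an integer and let c > 0 with c ≠ 1. There exist ε > 0 and C > 0, depending only on c and d, such that for every τ ∈ ℝ, every M > 0, every ξ ∈ ℝ^d with |ξ| ≤ εM, every l > 0, every axis-parallel cube Q ⊂ ℝ^d of side length e > 0, and all signs σ, σ′ ∈ {+1, −1}, the Lebesgue measure of the set { ξ₁ ∈ Q : |τ + σ·c·|ξ₁| + σ′·(1 + |ξ − ξ₁|)| ≤ l, M/2 ≤ |ξ₁| ≤ 2M, M/2 ≤ |ξ − ξ₁| ≤ 2M } is at most C·e^{d−1}·l. -/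
open MeasureTheory Filter
open scoped ENNReal BigOperators

open MeasureTheory


lemma abs_lower (x y : ℝ) : |x| - |y| ≤ |x + y| := by
  have h := abs_add_le (x + y) (-y)
  simp only [add_neg_cancel_right, abs_neg] at h
  linarith

lemma h_aux1 {M a t : ℝ} (hM : 0 < M) (ha : 0 < a) (h : M ≤ a*t) : 0 < t := by nlinarith

lemma h_aux2 {M sd ε : ℝ} (hM : 0 < M) (h : ε*(4*sd) ≤ 1) : 4*sd*(ε*M) ≤ M := by nlinarith

lemma h_aux3 {M sd t h ε : ℝ} (hsd0 : 0 < sd) (hM : 0 < M) (ht' : M ≤ 2*sd*t)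
    (hεM : 4*sd*(ε*M) ≤ M) (hge : t - ε*M ≤ h) : M ≤ 4*sd*h := by nlinarith

lemma h_aux4 {P Gs R : ℝ} (h : P*Gs = R) (hR : 0 ≤ R) (hG : 0 < Gs) : 0 ≤ P := by nlinarith

lemma h_aux5 {Δ M sd P Gs t₁ t₂ : ℝ} (hM : 0 < M) (hsd0 : 0 < sd) (hΔ0 : 0 ≤ Δ)
    (hP0 : 0 ≤ P) (id1 : P*Gs = Δ*(t₁+t₂)) (ht₁' : M ≤ 2*sd*t₁) (ht : t₁ ≤ t₂)
    (hGsM : Gs ≤ 4*M) : Δ ≤ 4*sd*P := by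
  have h1 : Δ*M ≤ sd*(Δ*(t₁+t₂)) := by
    nlinarith [mul_le_mul_of_nonneg_left ht₁' hΔ0,
      mul_nonneg hsd0.le (mul_nonneg hΔ0 (sub_nonneg.2 ht))]
  have h2 : sd*(P*Gs) ≤ sd*(P*(4*M)) := by
    nlinarith [mul_nonneg hsd0.le (mul_nonneg hP0 (sub_nonneg.2 hGsM))]
  rw [id1] at h2
  have h3 : Δ*M ≤ 4*sd*P*M := by nlinarith
  exact le_of_mul_le_mul_right (by linarith) hM

lemma h_aux6 {x Gs Hs s εM : ℝ} (hx0 : 0 ≤ x) (hxG : x ≤ Gs)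
    (hGH : |Gs - Hs| ≤ 2*εM) (hs : |s| ≤ εM) : |x*(Gs-Hs) - 2*s*Gs| ≤ 4*εM*Gs := by
  have h1 := abs_le.1 hGH
  have h2 := abs_le.1 hs
  have hεM0 : 0 ≤ εM := le_trans (abs_nonneg s) hs
  have hG0 : 0 ≤ Gs := le_trans hx0 hxG
  rw [abs_le]
  constructor <;> nlinarith

lemma h_aux7 {Δ ε M sd Hs Gs : ℝ} (hΔ0 : 0 ≤ Δ) (hε0 : 0 ≤ ε) (hG0 : 0 ≤ Gs)
    (hHsM : M ≤ 2*sd*Hs) : Δ*(4*(ε*M)*Gs) ≤ 8*sd*ε*Δ*(Hs*Gs) := by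
  nlinarith [mul_le_mul_of_nonneg_left hHsM (mul_nonneg (mul_nonneg hΔ0 hε0) hG0)]

lemma core_poly (c σ σ' M l ε sd s τ t₁ t₂ g₁ g₂ h₁ h₂ : ℝ)
    (hc : 0 < c) (hc1 : c ≠ 1) (hsd : 1 ≤ sd)
    (hσ : σ = 1 ∨ σ = -1) (hσ' : σ' = 1 ∨ σ' = -1)
    (hM : 0 < M) (hl : 0 < l)
    (hε0 : 0 < ε) (hε1' : ε*(4*sd) ≤ 1) (hε2' : 8*sd*ε*(8*sd) ≤ |c-1|)
    (hs : |s| ≤ ε*M)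
    (g₁0 : 0 ≤ g₁) (g₂0 : 0 ≤ g₂) (h₁0 : 0 ≤ h₁) (h₂0 : 0 ≤ h₂)
    (hg₁t : t₁ ≤ g₁) (hg₂t : t₂ ≤ g₂)
    (sqdiff1 : g₂^2 - g₁^2 = t₂^2 - t₁^2)
    (sqdiff2 : h₂^2 - h₁^2 = (t₂-s)^2 - (t₁-s)^2)
    (hgh1 : |h₁ - g₁| ≤ ε*M) (hgh2 : |h₂ - g₂| ≤ ε*M)
    (ht : t₁ ≤ t₂) (ht₁' : M ≤ 2*sd*t₁)
    (hg1 : g₁ ≤ 2*M) (hg2 : g₂ ≤ 2*M)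
    (hF1 : |τ + σ*c*g₁ + σ'*(1+h₁)| ≤ l)
    (hF2 : |τ + σ*c*g₂ + σ'*(1+h₂)| ≤ l) :
    t₂ - t₁ ≤ 16*sd*l/|c-1| := by
  have hsd0 : 0 < sd := lt_of_lt_of_le one_pos hsd
  have hδ : 0 < |c-1| := abs_pos.2 (sub_ne_zero.2 hc1)
  have ht₁0 : 0 < t₁ := h_aux1 hM (by positivity) ht₁'
  have ht₂0 : 0 < t₂ := lt_of_lt_of_le ht₁0 ht
  have hεM : 4*sd*(ε*M) ≤ M := h_aux2 hM hε1'
  have hgh1' := abs_le.1 hgh1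
  have hgh2' := abs_le.1 hgh2
  have hh₁lb : M ≤ 4*sd*h₁ := h_aux3 hsd0 hM ht₁' hεM (by linarith)
  have hh₂lb : M ≤ 4*sd*h₂ := h_aux3 (t := t₂) hsd0 hM
    (ht₁'.trans (mul_le_mul_of_nonneg_left ht (by positivity))) hεM (by linarith)
  set Δ := t₂ - t₁ with hΔdef
  have hΔ0 : 0 ≤ Δ := by simp only [hΔdef]; linarith
  set P := g₂ - g₁ with hPdef
  set Q := h₂ - h₁ with hQdef
  set Gs := g₁ + g₂ with hGdef
  set Hs := h₁ + h₂ with hHdef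
  have hGs0 : 0 < Gs := by simp only [hGdef]; linarith
  have h₁pos : 0 < h₁ := h_aux1 hM (by positivity) hh₁lb
  have h₂pos : 0 < h₂ := h_aux1 hM (by positivity) hh₂lb
  have hHs0 : 0 < Hs := by simp only [hHdef]; linarith
  have hHsM : M ≤ 2*sd*Hs := by simp only [hHdef]; linarith
  have hGsM : Gs ≤ 4*M := by simp only [hGdef]; linarith
  have htG : t₁ + t₂ ≤ Gs := by simp only [hGdef]; linarith
  have id1 : P * Gs = Δ * (t₁+t₂) := by
    simp only [hPdef, hGdef, hΔdef]; linear_combination sqdiff1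
  have id2 : Q * Hs = Δ * (t₁+t₂-2*s) := by
    simp only [hQdef, hHdef, hΔdef]; linear_combination sqdiff2
  have hP0 : 0 ≤ P := h_aux4 id1 (by positivity) hGs0
  have hPlb : Δ ≤ 4*sd*P := h_aux5 hM hsd0 hΔ0 hP0 id1 ht₁' ht hGsM
  have hGH : |Gs - Hs| ≤ 2*(ε*M) := by
    rw [abs_le]; constructor <;> simp only [hGdef, hHdef] <;> linarith
  have hQP : |Q - P| ≤ 8*sd*ε*Δ := by
    have key : (Q - P) * (Hs * Gs) = Δ * ((t₁+t₂)*(Gs-Hs) - 2*s*Gs) := by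
      linear_combination Gs * id2 - Hs * id1
    have hbig : |Δ * ((t₁+t₂)*(Gs-Hs) - 2*s*Gs)| ≤ Δ * (4*(ε*M)*Gs) := by
      rw [abs_mul, abs_of_nonneg hΔ0]
      exact mul_le_mul_of_nonneg_left (h_aux6 (by linarith) htG hGH hs) hΔ0
    have hpos : 0 < Hs * Gs := mul_pos hHs0 hGs0
    have final : |Q - P| * (Hs*Gs) ≤ (8*sd*ε*Δ) * (Hs*Gs) := by
      have e2 : |Q - P| * (Hs*Gs) = |(Q-P)*(Hs*Gs)| := by
        rw [abs_mul, abs_of_pos hpos]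
      rw [e2, key]
      exact hbig.trans (h_aux7 hΔ0 hε0.le hGs0.le hHsM)
    exact le_of_mul_le_mul_right final hpos
  have hF : |(τ + σ*c*g₂ + σ'*(1+h₂)) - (τ + σ*c*g₁ + σ'*(1+h₁))| ≤ 2*l := by
    calc |(τ + σ*c*g₂ + σ'*(1+h₂)) - (τ + σ*c*g₁ + σ'*(1+h₁))|
        ≤ |τ + σ*c*g₂ + σ'*(1+h₂)| + |τ + σ*c*g₁ + σ'*(1+h₁)| := abs_sub _ _
    _ ≤ 2*l := by linarith
  have hcmin : |c-1| ≤ c+1 := by rw [abs_le]; constructor <;> linarith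
  have hcP : |c-1| * P ≤ (c+1)*P := mul_le_mul_of_nonneg_right hcmin hP0
  have habs : |c-1| * P - |Q-P| ≤ 2*l := by
    rcases hσ with rfl | rfl <;> rcases hσ' with rfl | rfl
    · have e : (τ + 1*c*g₂ + 1*(1+h₂)) - (τ + 1*c*g₁ + 1*(1+h₁)) = c*P + Q := by
        simp only [hPdef, hQdef]; ring
      rw [e] at hF
      have tri := abs_lower ((c+1)*P) (Q-P)
      rw [show (c+1)*P + (Q-P) = c*P + Q by ring,
        abs_of_nonneg (by positivity : (0:ℝ) ≤ (c+1)*P)] at tri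
      linarith
    · have e : (τ + 1*c*g₂ + -1*(1+h₂)) - (τ + 1*c*g₁ + -1*(1+h₁)) = c*P - Q := by
        simp only [hPdef, hQdef]; ring
      rw [e] at hF
      have tri := abs_lower ((c-1)*P) (-(Q-P))
      rw [show (c-1)*P + -(Q-P) = c*P - Q by ring, abs_neg,
        abs_mul, abs_of_nonneg hP0] at tri
      linarith
    · have e : (τ + -1*c*g₂ + 1*(1+h₂)) - (τ + -1*c*g₁ + 1*(1+h₁)) = -(c*P - Q) := by
        simp only [hPdef, hQdef]; ring
      rw [e, abs_neg] at hF
      have tri := abs_lower ((c-1)*P) (-(Q-P))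
      rw [show (c-1)*P + -(Q-P) = c*P - Q by ring, abs_neg,
        abs_mul, abs_of_nonneg hP0] at tri
      linarith
    · have e : (τ + -1*c*g₂ + -1*(1+h₂)) - (τ + -1*c*g₁ + -1*(1+h₁)) = -(c*P + Q) := by
        simp only [hPdef, hQdef]; ring
      rw [e, abs_neg] at hF
      have tri := abs_lower ((c+1)*P) (Q-P)
      rw [show (c+1)*P + (Q-P) = c*P + Q by ring,
        abs_of_nonneg (by positivity : (0:ℝ) ≤ (c+1)*P)] at tri
      linarith
  rw [le_div_iff₀ hδ]
  have k1 : |c-1| * Δ ≤ |c-1| * (4*sd*P) := mul_le_mul_of_nonneg_left hPlb hδ.le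
  have k2 : |c-1| * P ≤ 2*l + 8*sd*ε*Δ := by
    linarith [habs, (abs_le.1 hQP).2, abs_nonneg (Q-P), hQP]
  have k2' := mul_le_mul_of_nonneg_left k2 (by positivity : (0:ℝ) ≤ 4*sd)
  have k3 := mul_le_mul_of_nonneg_right hε2' hΔ0
  linarith [k1, k2', k3]

lemma core_est (c σ σ' M l ε sd A B s τ t₁ t₂ : ℝ)
    (hc : 0 < c) (hc1 : c ≠ 1) (hsd : 1 ≤ sd)
    (hσ : σ = 1 ∨ σ = -1) (hσ' : σ' = 1 ∨ σ' = -1)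
    (hM : 0 < M) (hl : 0 < l) (hA : 0 ≤ A) (hB : 0 ≤ B)
    (hε0 : 0 < ε) (hε1 : ε ≤ 1/(4*sd)) (hε2 : 8*sd*ε ≤ |c-1|/(8*sd))
    (hs : |s| ≤ ε*M)
    (hgh1 : |Real.sqrt ((t₁-s)^2+B) - Real.sqrt (t₁^2+A)| ≤ ε*M)
    (hgh2 : |Real.sqrt ((t₂-s)^2+B) - Real.sqrt (t₂^2+A)| ≤ ε*M)
    (ht : t₁ ≤ t₂) (ht₁ : M/(2*sd) ≤ t₁)
    (hg1 : Real.sqrt (t₁^2+A) ≤ 2*M) (hg2 : Real.sqrt (t₂^2+A) ≤ 2*M)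
    (hF1 : |τ + σ*c*Real.sqrt (t₁^2+A) + σ'*(1+Real.sqrt ((t₁-s)^2+B))| ≤ l)
    (hF2 : |τ + σ*c*Real.sqrt (t₂^2+A) + σ'*(1+Real.sqrt ((t₂-s)^2+B))| ≤ l) :
    t₂ - t₁ ≤ 16*sd*l/|c-1| := by
  have hsd0 : 0 < sd := lt_of_lt_of_le one_pos hsd
  have ht₁0 : 0 < t₁ := lt_of_lt_of_le (by positivity) ht₁
  have sqg₁ : (Real.sqrt (t₁^2+A))^2 = t₁^2+A := Real.sq_sqrt (by positivity)
  have sqg₂ : (Real.sqrt (t₂^2+A))^2 = t₂^2+A := Real.sq_sqrt (by positivity)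
  have sqh₁ : (Real.sqrt ((t₁-s)^2+B))^2 = (t₁-s)^2+B := Real.sq_sqrt (by positivity)
  have sqh₂ : (Real.sqrt ((t₂-s)^2+B))^2 = (t₂-s)^2+B := Real.sq_sqrt (by positivity)
  refine core_poly c σ σ' M l ε sd s τ t₁ t₂ _ _ _ _ hc hc1 hsd hσ hσ' hM hl hε0
    ((le_div_iff₀ (by positivity)).1 hε1) ((le_div_iff₀ (by positivity)).1 hε2) hs
    (Real.sqrt_nonneg _) (Real.sqrt_nonneg _) (Real.sqrt_nonneg _) (Real.sqrt_nonneg _)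
    ?_ ?_ (by rw [sqg₁, sqg₂]; ring) (by rw [sqh₁, sqh₂]; ring)
    hgh1 hgh2 ht ?_ hg1 hg2 hF1 hF2
  · calc t₁ = Real.sqrt (t₁^2) := (Real.sqrt_sq ht₁0.le).symm
    _ ≤ _ := Real.sqrt_le_sqrt (by linarith)
  · calc t₂ = Real.sqrt (t₂^2) := (Real.sqrt_sq (ht₁0.le.trans ht)).symm
    _ ≤ _ := Real.sqrt_le_sqrt (by linarith)
  · rw [div_le_iff₀ (by positivity)] at ht₁; linarith


lemma norm_succAbove {m : ℕ} (i : Fin (m+1)) (x : Ed (m+1)) :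
    ‖x‖ = Real.sqrt ((x i)^2 + ∑ j : Fin m, (x (i.succAbove j))^2) := by
  rw [EuclideanSpace.norm_eq, Fin.sum_univ_succAbove (fun k => ‖x k‖^2) i]
  simp [Real.norm_eq_abs, sq_abs]

lemma coord_le_norm {m : ℕ} (x : Ed m) (i : Fin m) : |x i| ≤ ‖x‖ := by
  rw [EuclideanSpace.norm_eq]
  have h : |x i|^2 ≤ ∑ j, ‖x j‖^2 := by
    have := Finset.single_le_sum (f := fun j => ‖x j‖^2) (fun j _ => by positivity)
      (Finset.mem_univ i)
    simpa [Real.norm_eq_abs] using this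
  calc |x i| = Real.sqrt (|x i|^2) := (Real.sqrt_sq (abs_nonneg _)).symm
  _ ≤ _ := Real.sqrt_le_sqrt h


lemma slice_bound (n : ℕ) (S : Set (Ed (n+1))) (hS : MeasurableSet S) (i : Fin (n+1))
    (a : Ed (n+1)) (e L : ℝ) (he : 0 ≤ e) (hL : 0 ≤ L)
    (hsub : ∀ ξ₁ ∈ S, ∀ j : Fin n,
      ξ₁ (i.succAbove j) ∈ Set.Icc (a (i.succAbove j)) (a (i.succAbove j) + e))
    (hdiam : ∀ ξ₁ ζ₁, ξ₁ ∈ S → ζ₁ ∈ S →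
      (∀ j : Fin n, ξ₁ (i.succAbove j) = ζ₁ (i.succAbove j)) → |ξ₁ i - ζ₁ i| ≤ L) :
    volume S ≤ ENNReal.ofReal (e^n * L) := by
  classical
  set eqv := (MeasurableEquiv.toLp 2 (Fin (n+1) → ℝ)).symm with heqv
  set ψ := MeasurableEquiv.piFinSuccAbove (fun _ : Fin (n+1) => ℝ) i with hψ
  have mp1 := EuclideanSpace.volume_preserving_symm_measurableEquiv_toLp (Fin (n+1))
  have mp2 := MeasureTheory.volume_preserving_piFinSuccAbove (fun _ : Fin (n+1) => ℝ) i
  set T : Set (Fin (n+1) → ℝ) := eqv.symm ⁻¹' S with hT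
  have hTm : MeasurableSet T := eqv.symm.measurable hS
  set R : Set (ℝ × (Fin n → ℝ)) := ψ.symm ⁻¹' T with hR
  have hRm : MeasurableSet R := ψ.symm.measurable hTm
  -- points
  set pt : ℝ → (Fin n → ℝ) → Ed (n+1) := fun t y => eqv.symm (ψ.symm (t, y)) with hpt
  have hmem : ∀ t y, (t, y) ∈ R ↔ pt t y ∈ S := fun t y => Iff.rfl
  have hcoord_i : ∀ t y, pt t y i = t := by
    intro t y
    simp [hpt, heqv, hψ, MeasurableEquiv.piFinSuccAbove_symm_apply,
      MeasurableEquiv.symm_symm, MeasurableEquiv.coe_toLp,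
      Fin.insertNthEquiv, Fin.insertNth_apply_same]
  have hcoord_s : ∀ t y j, pt t y (i.succAbove j) = y j := by
    intro t y j
    simp [hpt, heqv, hψ, MeasurableEquiv.piFinSuccAbove_symm_apply,
      MeasurableEquiv.symm_symm, MeasurableEquiv.coe_toLp,
      Fin.insertNthEquiv, Fin.insertNth_apply_succAbove]
  -- reduce to R
  have v1 : volume S = volume T :=
    ((mp1.symm _).measure_preimage hS.nullMeasurableSet).symm
  have v2 : volume T = (volume : Measure (ℝ × (Fin n → ℝ))) R :=
    ((mp2.symm _).measure_preimage hTm.nullMeasurableSet).symm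
  set face : Set (Fin n → ℝ) :=
    Set.pi Set.univ (fun j => Set.Icc (a (i.succAbove j)) (a (i.succAbove j) + e)) with hface
  have hfacem : MeasurableSet face := MeasurableSet.univ_pi fun j => measurableSet_Icc
  have hslice : ∀ y : Fin n → ℝ,
      volume ((fun x => (x, y)) ⁻¹' R) ≤ face.indicator (fun _ => ENNReal.ofReal L) y := by
    intro y
    by_cases hy : y ∈ face
    · rw [Set.indicator_of_mem hy]
      refine le_trans (Real.volume_le_diam _) (EMetric.diam_le ?_)
      intro t₁ h₁ t₂ h₂
      rw [edist_dist, Real.dist_eq]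
      refine ENNReal.ofReal_le_ofReal ?_
      have := hdiam (pt t₁ y) (pt t₂ y) ((hmem t₁ y).1 h₁) ((hmem t₂ y).1 h₂)
        (fun j => by rw [hcoord_s, hcoord_s])
      rwa [hcoord_i, hcoord_i] at this
    · have : (fun x => (x, y)) ⁻¹' R = ∅ := by
        ext t
        simp only [Set.mem_preimage, Set.mem_empty_iff_false, iff_false]
        intro hmemR
        exact hy (fun j _ => by
          have := hsub _ ((hmem t y).1 hmemR) j
          rwa [hcoord_s] at this)
      rw [this]
      simp
  calc volume S = (volume : Measure (ℝ × (Fin n → ℝ))) R := v1.trans v2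
  _ = ∫⁻ y, volume ((fun x => (x, y)) ⁻¹' R) := by
      rw [Measure.volume_eq_prod, Measure.prod_apply_symm hRm]
  _ ≤ ∫⁻ y, face.indicator (fun _ => ENNReal.ofReal L) y := lintegral_mono hslice
  _ = ENNReal.ofReal L * volume face := by
      rw [lintegral_indicator hfacem, setLIntegral_const]
  _ ≤ ENNReal.ofReal (e^n * L) := by
      have : volume face = ENNReal.ofReal e ^ n := by
        rw [hface, volume_pi_pi]
        simp [Real.volume_Icc]
      rw [this, ← ENNReal.ofReal_pow he, ← ENNReal.ofReal_mul hL]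
      exact le_of_eq (by rw [mul_comm])


/-- Level-set measure bound for the wave/Klein-Gordon resonance function. -/
theorem stmt2 (d : ℕ) (hd : 1 ≤ d) (c : ℝ) (hc : 0 < c) (hc1 : c ≠ 1) :
    ∃ ε > (0:ℝ), ∃ C > (0:ℝ),
      ∀ (τ : ℝ) (M : ℝ), 0 < M → ∀ ξ : Ed d, ‖ξ‖ ≤ ε * M →
      ∀ l : ℝ, 0 < l → ∀ (a : Ed d) (e : ℝ), 0 < e →
      ∀ σ σ' : ℝ, (σ = 1 ∨ σ = -1) → (σ' = 1 ∨ σ' = -1) →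
      MeasureTheory.volume {ξ₁ : Ed d |
          (∀ i, ξ₁ i ∈ Set.Icc (a i) (a i + e)) ∧
          |τ + σ * c * ‖ξ₁‖ + σ' * (1 + ‖ξ - ξ₁‖)| ≤ l ∧
          M/2 ≤ ‖ξ₁‖ ∧ ‖ξ₁‖ ≤ 2*M ∧ M/2 ≤ ‖ξ - ξ₁‖ ∧ ‖ξ - ξ₁‖ ≤ 2*M}
        ≤ ENNReal.ofReal (C * e^(d-1) * l) := by
  obtain ⟨n, rfl⟩ : ∃ n, d = n + 1 := ⟨d - 1, (Nat.succ_pred_eq_of_pos hd).symm⟩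
  have hδ : 0 < |c-1| := abs_pos.2 (sub_ne_zero.2 hc1)
  set sd : ℝ := Real.sqrt ((n:ℝ)+1) with hsddef
  have hsd : 1 ≤ sd := by
    have h := Real.sqrt_le_sqrt (show (1:ℝ) ≤ (n:ℝ)+1 by linarith [Nat.cast_nonneg (α := ℝ) n])
    rwa [Real.sqrt_one] at h
  have hsd0 : 0 < sd := lt_of_lt_of_le one_pos hsd
  refine ⟨min (1/(4*sd)) (|c-1|/(64*sd^2)), by positivity,
    32*((n:ℝ)+1)*sd/|c-1|, by positivity, ?_⟩
  set ε := min (1/(4*sd)) (|c-1|/(64*sd^2)) with hεdef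
  have hε0 : 0 < ε := by positivity
  have hε1 : ε ≤ 1/(4*sd) := min_le_left _ _
  have hε2 : 8*sd*ε ≤ |c-1|/(8*sd) := by
    have h1 : ε ≤ |c-1|/(64*sd^2) := min_le_right _ _
    have h2 : 8*sd*ε ≤ 8*sd*(|c-1|/(64*sd^2)) := mul_le_mul_of_nonneg_left h1 (by positivity)
    have h3 : 8*sd*(|c-1|/(64*sd^2)) = |c-1|/(8*sd) := by field_simp; ring
    linarith
  intro τ M hM ξ hξ l hl a e he σ σ' hσ hσ'
  set S : Set (Ed (n+1)) := {ξ₁ |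
      (∀ i, ξ₁ i ∈ Set.Icc (a i) (a i + e)) ∧
      |τ + σ * c * ‖ξ₁‖ + σ' * (1 + ‖ξ - ξ₁‖)| ≤ l ∧
      M/2 ≤ ‖ξ₁‖ ∧ ‖ξ₁‖ ≤ 2*M ∧ M/2 ≤ ‖ξ - ξ₁‖ ∧ ‖ξ - ξ₁‖ ≤ 2*M} with hSdef
  have hcont : ∀ k : Fin (n+1), Continuous fun ξ₁ : Ed (n+1) => ξ₁ k :=
    fun k => PiLp.continuous_apply 2 _ k
  have hnorm1 : Continuous fun ξ₁ : Ed (n+1) => ‖ξ₁‖ := continuous_norm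
  have hnorm2 : Continuous fun ξ₁ : Ed (n+1) => ‖ξ - ξ₁‖ :=
    (continuous_const.sub continuous_id).norm
  have hSc : IsClosed S := by
    have h1 : IsClosed {ξ₁ : Ed (n+1) | ∀ i, ξ₁ i ∈ Set.Icc (a i) (a i + e)} := by
      rw [Set.setOf_forall]
      exact isClosed_iInter fun k => isClosed_Icc.preimage (hcont k)
    have h2 : IsClosed {ξ₁ : Ed (n+1) | |τ + σ * c * ‖ξ₁‖ + σ' * (1 + ‖ξ - ξ₁‖)| ≤ l} :=
      isClosed_le (Continuous.abs (((continuous_const.add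
        (continuous_const.mul hnorm1))).add
        (continuous_const.mul (continuous_const.add hnorm2)))) continuous_const
    have h3 : IsClosed {ξ₁ : Ed (n+1) | M/2 ≤ ‖ξ₁‖} := isClosed_le continuous_const hnorm1
    have h4 : IsClosed {ξ₁ : Ed (n+1) | ‖ξ₁‖ ≤ 2*M} := isClosed_le hnorm1 continuous_const
    have h5 : IsClosed {ξ₁ : Ed (n+1) | M/2 ≤ ‖ξ - ξ₁‖} := isClosed_le continuous_const hnorm2
    have h6 : IsClosed {ξ₁ : Ed (n+1) | ‖ξ - ξ₁‖ ≤ 2*M} := isClosed_le hnorm2 continuous_const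
    exact h1.inter (h2.inter (h3.inter (h4.inter (h5.inter h6))))
  set L := 16*sd*l/|c-1| with hLdef
  have hL0 : 0 ≤ L := by positivity
  set Sp : Fin (n+1) → Set (Ed (n+1)) := fun i => S ∩ {ξ₁ | ‖ξ₁‖ ≤ sd * ξ₁ i} with hSpdef
  set Sm : Fin (n+1) → Set (Ed (n+1)) := fun i => S ∩ {ξ₁ | sd * ξ₁ i ≤ -‖ξ₁‖} with hSmdef
  have hSpm : ∀ i, MeasurableSet (Sp i) := fun i =>
    (hSc.inter (isClosed_le hnorm1 (continuous_const.mul (hcont i)))).measurableSet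
  have hSmm : ∀ i, MeasurableSet (Sm i) := fun i =>
    (hSc.inter (isClosed_le (continuous_const.mul (hcont i)) hnorm1.neg)).measurableSet
  have hcover : S ⊆ ⋃ i : Fin (n+1), (Sp i ∪ Sm i) := by
    intro ξ₁ hmem
    obtain ⟨i, -, hi⟩ := Finset.exists_max_image Finset.univ (fun j => |ξ₁ j|)
      ⟨0, Finset.mem_univ 0⟩
    have hn : ‖ξ₁‖ ≤ sd * |ξ₁ i| := by
      rw [EuclideanSpace.norm_eq]
      have hsum : ∑ j, ‖ξ₁ j‖^2 ≤ ((n:ℝ)+1) * |ξ₁ i|^2 := by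
        calc ∑ j, ‖ξ₁ j‖^2 ≤ ∑ _j : Fin (n+1), |ξ₁ i|^2 := Finset.sum_le_sum (fun j _ => by
              have hj := hi j (Finset.mem_univ j)
              rw [Real.norm_eq_abs]
              nlinarith [abs_nonneg (ξ₁ j), abs_nonneg (ξ₁ i)])
        _ = ((n:ℝ)+1) * |ξ₁ i|^2 := by
              rw [Finset.sum_const, Finset.card_univ, Fintype.card_fin, nsmul_eq_mul]
              push_cast; ring
      calc Real.sqrt (∑ j, ‖ξ₁ j‖^2) ≤ Real.sqrt (((n:ℝ)+1) * |ξ₁ i|^2) :=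
            Real.sqrt_le_sqrt hsum
      _ = sd * |ξ₁ i| := by
            rw [Real.sqrt_mul (by positivity) (|ξ₁ i|^2), Real.sqrt_sq (abs_nonneg _), hsddef]
    rcases le_or_gt 0 (ξ₁ i) with hsign | hsign
    · exact Set.mem_iUnion.2 ⟨i, Or.inl ⟨hmem, by
        rw [abs_of_nonneg hsign] at hn; exact hn⟩⟩
    · refine Set.mem_iUnion.2 ⟨i, Or.inr ⟨hmem, ?_⟩⟩
      rw [abs_of_neg hsign] at hn
      simp only [Set.mem_setOf_eq]
      linarith
  -- common facts
  have habsnorm : ∀ ζ : Ed (n+1), |‖ξ - ζ‖ - ‖ζ‖| ≤ ε*M := by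
    intro ζ
    have h := abs_norm_sub_norm_le (ξ - ζ) (-ζ)
    simp only [sub_neg_eq_add, sub_add_cancel, norm_neg] at h
    exact h.trans hξ
  -- plus pieces
  have hplus : ∀ i, volume (Sp i) ≤ ENNReal.ofReal (e^n * L) := by
    intro i
    apply slice_bound n (Sp i) (hSpm i) i a e L he.le hL0
    · exact fun ξ₁ h j => h.1.1 (i.succAbove j)
    · have key : ∀ ξ₁ ζ₁ : Ed (n+1), ξ₁ ∈ Sp i → ζ₁ ∈ Sp i →
          (∀ j : Fin n, ξ₁ (i.succAbove j) = ζ₁ (i.succAbove j)) →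
          ξ₁ i ≤ ζ₁ i → ζ₁ i - ξ₁ i ≤ L := by
        intro ξ₁ ζ₁ h₁ h₂ hcoords hle
        obtain ⟨⟨hcube₁, hres₁, hlo₁, hhi₁, hlo₁', hhi₁'⟩, hdir₁⟩ := h₁
        obtain ⟨⟨hcube₂, hres₂, hlo₂, hhi₂, hlo₂', hhi₂'⟩, hdir₂⟩ := h₂
        set A := ∑ j : Fin n, (ξ₁ (i.succAbove j))^2 with hAdef
        set B := ∑ j : Fin n, (ξ (i.succAbove j) - ξ₁ (i.succAbove j))^2 with hBdef
        have hA0 : 0 ≤ A := Finset.sum_nonneg fun j _ => sq_nonneg _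
        have hB0 : 0 ≤ B := Finset.sum_nonneg fun j _ => sq_nonneg _
        have hn₁ : ‖ξ₁‖ = Real.sqrt ((ξ₁ i)^2 + A) := norm_succAbove i ξ₁
        have hn₂ : ‖ζ₁‖ = Real.sqrt ((ζ₁ i)^2 + A) := by
          rw [norm_succAbove i ζ₁, hAdef]
          congr 2
          exact Finset.sum_congr rfl fun j _ => by rw [hcoords j]
        have hm₁ : ‖ξ - ξ₁‖ = Real.sqrt ((ξ₁ i - ξ i)^2 + B) := by
          rw [norm_succAbove i (ξ - ξ₁), hBdef]
          congr 1
          simp only [PiLp.sub_apply]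
          rw [show (ξ i - ξ₁ i)^2 = (ξ₁ i - ξ i)^2 by ring]
        have hm₂ : ‖ξ - ζ₁‖ = Real.sqrt ((ζ₁ i - ξ i)^2 + B) := by
          rw [norm_succAbove i (ξ - ζ₁), hBdef]
          congr 1
          simp only [PiLp.sub_apply]
          rw [Finset.sum_congr rfl fun j (_ : j ∈ Finset.univ) =>
            (by rw [hcoords j] : (ξ (i.succAbove j) - ξ₁ (i.succAbove j))^2
              = (ξ (i.succAbove j) - ζ₁ (i.succAbove j))^2),
            show (ξ i - ζ₁ i)^2 = (ζ₁ i - ξ i)^2 by ring]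
        have ht₁M : M/(2*sd) ≤ ξ₁ i := by
          rw [div_le_iff₀ (by positivity)]
          have : ‖ξ₁‖ ≤ sd * ξ₁ i := hdir₁
          rw [hn₁] at this hlo₁
          linarith
        have hsξ : |ξ i| ≤ ε*M := (coord_le_norm ξ i).trans hξ
        have hgh1 := habsnorm ξ₁
        rw [hm₁, hn₁] at hgh1
        have hgh2 := habsnorm ζ₁
        rw [hm₂, hn₂] at hgh2
        have := core_est c σ σ' M l ε sd A B (ξ i) τ (ξ₁ i) (ζ₁ i) hc hc1 hsd hσ hσ'
          hM hl hA0 hB0 hε0 hε1 hε2 hsξ hgh1 hgh2 hle ht₁M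
          (by rw [← hn₁]; exact hhi₁) (by rw [← hn₂]; exact hhi₂)
          (by rw [← hn₁, ← hm₁]; exact hres₁) (by rw [← hn₂, ← hm₂]; exact hres₂)
        rw [hLdef]
        exact this
      intro ξ₁ ζ₁ h₁ h₂ hcoords
      rcases le_total (ξ₁ i) (ζ₁ i) with h | h
      · rw [abs_of_nonpos (by linarith), neg_sub]
        exact key ξ₁ ζ₁ h₁ h₂ hcoords h
      · rw [abs_of_nonneg (by linarith)]
        exact key ζ₁ ξ₁ h₂ h₁ (fun j => (hcoords j).symm) h
  -- minus pieces
  have hminus : ∀ i, volume (Sm i) ≤ ENNReal.ofReal (e^n * L) := by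
    intro i
    apply slice_bound n (Sm i) (hSmm i) i a e L he.le hL0
    · exact fun ξ₁ h j => h.1.1 (i.succAbove j)
    · have key : ∀ ξ₁ ζ₁ : Ed (n+1), ξ₁ ∈ Sm i → ζ₁ ∈ Sm i →
          (∀ j : Fin n, ξ₁ (i.succAbove j) = ζ₁ (i.succAbove j)) →
          ξ₁ i ≤ ζ₁ i → ζ₁ i - ξ₁ i ≤ L := by
        intro ξ₁ ζ₁ h₁ h₂ hcoords hle
        obtain ⟨⟨hcube₁, hres₁, hlo₁, hhi₁, hlo₁', hhi₁'⟩, hdir₁⟩ := h₁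
        obtain ⟨⟨hcube₂, hres₂, hlo₂, hhi₂, hlo₂', hhi₂'⟩, hdir₂⟩ := h₂
        set A := ∑ j : Fin n, (ξ₁ (i.succAbove j))^2 with hAdef
        set B := ∑ j : Fin n, (ξ (i.succAbove j) - ξ₁ (i.succAbove j))^2 with hBdef
        have hA0 : 0 ≤ A := Finset.sum_nonneg fun j _ => sq_nonneg _
        have hB0 : 0 ≤ B := Finset.sum_nonneg fun j _ => sq_nonneg _
        have hn₁ : ‖ξ₁‖ = Real.sqrt ((-(ξ₁ i))^2 + A) := by
          rw [norm_succAbove i ξ₁, neg_sq]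
        have hn₂ : ‖ζ₁‖ = Real.sqrt ((-(ζ₁ i))^2 + A) := by
          rw [norm_succAbove i ζ₁, neg_sq, hAdef]
          congr 2
          exact Finset.sum_congr rfl fun j _ => by rw [hcoords j]
        have hm₁ : ‖ξ - ξ₁‖ = Real.sqrt ((-(ξ₁ i) - -(ξ i))^2 + B) := by
          rw [norm_succAbove i (ξ - ξ₁), hBdef]
          congr 1
          simp only [PiLp.sub_apply]
          rw [show (ξ i - ξ₁ i)^2 = (-(ξ₁ i) - -(ξ i))^2 by ring]
        have hm₂ : ‖ξ - ζ₁‖ = Real.sqrt ((-(ζ₁ i) - -(ξ i))^2 + B) := by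
          rw [norm_succAbove i (ξ - ζ₁), hBdef]
          congr 1
          simp only [PiLp.sub_apply]
          rw [Finset.sum_congr rfl fun j (_ : j ∈ Finset.univ) =>
            (by rw [hcoords j] : (ξ (i.succAbove j) - ξ₁ (i.succAbove j))^2
              = (ξ (i.succAbove j) - ζ₁ (i.succAbove j))^2),
            show (ξ i - ζ₁ i)^2 = (-(ζ₁ i) - -(ξ i))^2 by ring]
        have ht₁M : M/(2*sd) ≤ -(ζ₁ i) := by
          rw [div_le_iff₀ (by positivity)]
          have h' : sd * ζ₁ i ≤ -‖ζ₁‖ := hdir₂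
          rw [hn₂] at h' hlo₂
          linarith
        have hsξ : |(-(ξ i))| ≤ ε*M := by
          rw [abs_neg]; exact (coord_le_norm ξ i).trans hξ
        have hgh1 := habsnorm ζ₁
        rw [hm₂, hn₂] at hgh1
        have hgh2 := habsnorm ξ₁
        rw [hm₁, hn₁] at hgh2
        have := core_est c σ σ' M l ε sd A B (-(ξ i)) τ (-(ζ₁ i)) (-(ξ₁ i)) hc hc1 hsd hσ hσ'
          hM hl hA0 hB0 hε0 hε1 hε2 hsξ hgh1 hgh2 (by linarith) ht₁M
          (by rw [← hn₂]; exact hhi₂) (by rw [← hn₁]; exact hhi₁)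
          (by rw [← hn₂, ← hm₂]; exact hres₂) (by rw [← hn₁, ← hm₁]; exact hres₁)
        rw [hLdef]
        linarith
      intro ξ₁ ζ₁ h₁ h₂ hcoords
      rcases le_total (ξ₁ i) (ζ₁ i) with h | h
      · rw [abs_of_nonpos (by linarith), neg_sub]
        exact key ξ₁ ζ₁ h₁ h₂ hcoords h
      · rw [abs_of_nonneg (by linarith)]
        exact key ζ₁ ξ₁ h₂ h₁ (fun j => (hcoords j).symm) h
  calc volume S ≤ volume (⋃ i : Fin (n+1), (Sp i ∪ Sm i)) := measure_mono hcover
  _ ≤ ∑' i : Fin (n+1), volume (Sp i ∪ Sm i) := measure_iUnion_le _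
  _ = ∑ i : Fin (n+1), volume (Sp i ∪ Sm i) := tsum_fintype _
  _ ≤ ∑ i : Fin (n+1), (ENNReal.ofReal (e^n*L) + ENNReal.ofReal (e^n*L)) :=
      Finset.sum_le_sum fun i _ =>
        (measure_union_le _ _).trans (add_le_add (hplus i) (hminus i))
  _ = ((n:ℝ≥0∞)+1) * (ENNReal.ofReal (e^n*L) + ENNReal.ofReal (e^n*L)) := by
      rw [Finset.sum_const, Finset.card_univ, Fintype.card_fin, nsmul_eq_mul]
      push_cast
      ring
  _ ≤ ENNReal.ofReal (32*((n:ℝ)+1)*sd/|c-1| * e^(n+1-1) * l) := by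
      rw [← ENNReal.ofReal_add (by positivity) (by positivity),
        show ((n:ℝ≥0∞)+1) = ENNReal.ofReal ((n:ℝ)+1) by
          rw [ENNReal.ofReal_add (by positivity) (by norm_num), ENNReal.ofReal_natCast,
            ENNReal.ofReal_one],
        ← ENNReal.ofReal_mul (by positivity)]
      apply ENNReal.ofReal_le_ofReal
      simp only [Nat.add_sub_cancel]
      rw [hLdef]
      apply le_of_eq
      field_simp
      ring
end
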